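/- For G a connected graph with p vertices, diameter d, and any radio labeling f, span(f) ≥ (p-1)(d+1) - Σ_{i=1}^{p-1} d(v_{i-1}, v_i), where v_0,...,v_{p-1} is the ordering of all vertices by increasing label; consequently rn(G) ≥ (p-1)(d+1) - (p-1)·d = p - 1. -/

import Mathlib

open SimpleGraph Finset

/-- Path graph on `m` vertices: `i` adjacent to `j` iff they differ by 1. -/
def pathG (m : ℕ) : SimpleGraph (Fin m) where
  Adj u v := (u : ℕ) + 1 = v ∨ (v : ℕ) + 1 = u
  symm := by constructor; intro u v h; tauto
  loopless := by constructor; intro u h; rcases h with h | h <;> omega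

/-- Star `K_{1,n}`: center `0` adjacent to the `n` leaves. -/
def starG (n : ℕ) : SimpleGraph (Fin (n + 1)) where
  Adj u v := u ≠ v ∧ (u = 0 ∨ v = 0)
  symm := by constructor; intro u v h; exact ⟨h.1.symm, h.2.symm⟩
  loopless := by constructor; intro u h; exact h.1 rfl

/-- A radio labeling of `G`. -/
def IsRadioLabeling {V : Type*} (G : SimpleGraph V) (f : V → ℕ) : Prop :=
  ∀ u v : V, u ≠ v → (G.diam : ℤ) + 1 - G.dist u v ≤ |(f u : ℤ) - f v|

/-- The span of a labeling: max label minus min label. -/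
noncomputable def labelSpan {V : Type*} [Fintype V] [Nonempty V] (f : V → ℕ) : ℕ :=
  Finset.univ.sup f - Finset.univ.inf' Finset.univ_nonempty f

/-- The radio number of `G`: minimum span over all radio labelings. -/
noncomputable def radioNumber {V : Type*} [Fintype V] [Nonempty V] (G : SimpleGraph V) : ℕ :=
  sInf {s | ∃ f : V → ℕ, IsRadioLabeling G f ∧ labelSpan f = s}

set_option maxHeartbeats 1000000 in
/-- Auxiliary: telescoping lower bound on the span. -/
lemma aux_span_bound {V : Type*} [Fintype V] [Nonempty V]
    (G : SimpleGraph V) (hG : G.Connected)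
    (f : V → ℕ) (hf : IsRadioLabeling G f)
    (p : ℕ) (hp : p = Fintype.card V) (v : Fin p → V)
    (hv : Function.Bijective v) (hmono : StrictMono (fun i => f (v i))) :
    ((p : ℤ) - 1) * ((G.diam : ℤ) + 1)
      - ∑ i : Fin (p - 1),
          (G.dist (v (Fin.castLE (Nat.sub_le p 1) i)) (v ⟨(i : ℕ) + 1, (by omega : (i : ℕ) + 1 < p + 0)⟩) : ℤ)
      ≤ (labelSpan f : ℤ) := by
  classical
  have hp1 : 1 ≤ p := by rw [hp]; exact Fintype.card_pos
  obtain ⟨n, rfl⟩ : ∃ n, p = n + 1 := ⟨p - 1, by omega⟩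
  set D : ℕ → ℤ := fun i => if h : i < n then
      (G.dist (v ⟨i, by omega⟩) (v ⟨i + 1, by omega⟩) : ℤ) else 0 with hD
  set w : ℕ → ℤ := fun i => if h : i ≤ n then (f (v ⟨i, by omega⟩) : ℤ) else 0 with hw
  have key : ∀ i ∈ Finset.range n, (G.diam : ℤ) + 1 - D i ≤ w (i + 1) - w i := by
    intro i hi
    have hi' : i < n := Finset.mem_range.1 hi
    simp only [hD, hw, dif_pos hi', dif_pos hi'.le, dif_pos (by omega : i + 1 ≤ n)]
    have hne : v ⟨i, by omega⟩ ≠ v ⟨i + 1, by omega⟩ := by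
      intro h
      have := hv.injective h
      rw [Fin.mk.injEq] at this
      omega
    have h1 := hf _ _ hne
    have hlt : (⟨i, by omega⟩ : Fin (n + 1)) < ⟨i + 1, by omega⟩ := by
      simp [Fin.lt_def]
    have h2 : (f (v ⟨i, by omega⟩) : ℤ) < f (v ⟨i + 1, by omega⟩) := by
      exact_mod_cast hmono hlt
    rw [abs_sub_comm, abs_of_nonneg (by linarith)] at h1
    linarith
  have hsum : ∑ i ∈ Finset.range n, ((G.diam : ℤ) + 1 - D i) ≤ w n - w 0 := by
    rw [← Finset.sum_range_sub w n]
    exact Finset.sum_le_sum key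
  have hsplit : ∑ i ∈ Finset.range n, ((G.diam : ℤ) + 1 - D i)
      = (n : ℤ) * ((G.diam : ℤ) + 1) - ∑ i ∈ Finset.range n, D i := by
    rw [Finset.sum_sub_distrib, Finset.sum_const, Finset.card_range]
    ring
  have hgoalsum : ∑ i : Fin (n + 1 - 1),
      (G.dist (v (Fin.castLE (Nat.sub_le (n + 1) 1) i)) (v ⟨(i : ℕ) + 1, by omega⟩) : ℤ)
      = ∑ i ∈ Finset.range n, D i := by
    rw [← Fin.sum_univ_eq_sum_range D n]
    apply Finset.sum_congr rfl
    intro i _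
    have hi : (i : ℕ) < n := i.isLt
    simp only [hD, dif_pos hi]
    rfl
  have hwn : w n - w 0 = (f (v ⟨n, by omega⟩) : ℤ) - f (v ⟨0, by omega⟩) := by
    simp only [hw, dif_pos (le_refl n), dif_pos (Nat.zero_le n)]
  have hle_sup : f (v ⟨n, by omega⟩) ≤ Finset.univ.sup f :=
    Finset.le_sup (Finset.mem_univ _)
  have hge_inf : Finset.univ.inf' Finset.univ_nonempty f ≤ f (v ⟨0, by omega⟩) :=
    Finset.inf'_le f (Finset.mem_univ _)
  have hinf_sup : Finset.univ.inf' Finset.univ_nonempty f ≤ Finset.univ.sup f :=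
    le_trans hge_inf (Finset.le_sup (Finset.mem_univ _))
  have hcast : (labelSpan f : ℤ)
      = ((Finset.univ.sup f : ℕ) : ℤ) - ((Finset.univ.inf' Finset.univ_nonempty f : ℕ) : ℤ) := by
    unfold labelSpan
    omega
  have hfinal : w n - w 0 ≤ (labelSpan f : ℤ) := by
    rw [hwn, hcast]
    have h1 : (f (v ⟨n, by omega⟩) : ℤ) ≤ ((Finset.univ.sup f : ℕ) : ℤ) := by
      exact_mod_cast hle_sup
    have h2 : ((Finset.univ.inf' Finset.univ_nonempty f : ℕ) : ℤ) ≤ (f (v ⟨0, by omega⟩) : ℤ) := by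
      exact_mod_cast hge_inf
    linarith
  rw [hgoalsum]
  push_cast
  rw [hsplit] at hsum
  linarith

/-- Auxiliary: any radio labeling of a connected graph is injective and so has
span at least `card V - 1`. -/
lemma aux_card_le_span {V : Type*} [Fintype V] [Nonempty V]
    (G : SimpleGraph V) (hG : G.Connected)
    (f : V → ℕ) (hf : IsRadioLabeling G f) :
    Fintype.card V - 1 ≤ labelSpan f := by
  classical
  have hediam : G.ediam ≠ ⊤ := by
    obtain ⟨u, w, huw⟩ := G.exists_edist_eq_ediam_of_finite
    rw [← huw]
    exact SimpleGraph.edist_ne_top_iff_reachable.2 (hG.preconnected u w)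
  have hinjf : Function.Injective f := by
    intro u w huw
    by_contra hne
    have h1 := hf u w hne
    have h2 : (G.dist u w : ℤ) ≤ G.diam := by exact_mod_cast G.dist_le_diam hediam
    rw [huw] at h1
    simp at h1
    omega
  have hsub : Finset.univ.image f ⊆ Finset.Icc
      (Finset.univ.inf' Finset.univ_nonempty f) (Finset.univ.sup f) := by
    intro a ha
    obtain ⟨x, _, rfl⟩ := Finset.mem_image.1 ha
    exact Finset.mem_Icc.2 ⟨Finset.inf'_le f (Finset.mem_univ x),
      Finset.le_sup (Finset.mem_univ x)⟩
  have hcard : Fintype.card V = (Finset.univ.image f).card := by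
    rw [Finset.card_image_of_injective _ hinjf, Finset.card_univ]
  have h2 := Finset.card_le_card hsub
  rw [Nat.card_Icc] at h2
  unfold labelSpan
  omega

/-- Auxiliary: a radio labeling always exists. -/
lemma aux_exists_labeling {V : Type*} [Fintype V] [Nonempty V] (G : SimpleGraph V) :
    IsRadioLabeling G (fun x => (G.diam + 1) * (Fintype.equivFin V x : ℕ)) := by
  classical
  intro u x hux
  set a : ℕ := (Fintype.equivFin V u : ℕ)
  set b : ℕ := (Fintype.equivFin V x : ℕ)
  have hne : a ≠ b := by
    intro h
    exact hux ((Fintype.equivFin V).injective (Fin.ext h))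
  have hab : (1 : ℤ) ≤ |(a : ℤ) - b| :=
    Int.one_le_abs (sub_ne_zero.2 (by exact_mod_cast hne))
  have hmul : ((G.diam : ℤ) + 1) * 1 ≤ ((G.diam : ℤ) + 1) * |(a : ℤ) - b| :=
    mul_le_mul_of_nonneg_left hab (by positivity)
  have habs : |(((G.diam + 1) * a : ℕ) : ℤ) - (((G.diam + 1) * b : ℕ) : ℤ)|
      = ((G.diam : ℤ) + 1) * |(a : ℤ) - b| := by
    push_cast
    rw [← mul_sub, abs_mul, abs_of_nonneg (by positivity : (0:ℤ) ≤ (G.diam : ℤ) + 1)]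
  have hd0 : (0 : ℤ) ≤ G.dist u x := by positivity
  simp only []
  rw [habs]
  linarith

/-- ordering all `p` vertices by increasing label,
`span(f) ≥ (p-1)(d+1) - Σ_{i=1}^{p-1} d(v_{i-1}, v_i)`; consequently `rn(G) ≥ p - 1`. -/
theorem span_lower_bound_and_radioNumber {V : Type*} [Fintype V] [Nonempty V]
    (G : SimpleGraph V) (hG : G.Connected) :
    (∀ (f : V → ℕ), IsRadioLabeling G f →
      ∀ (p : ℕ) (hp : p = Fintype.card V) (v : Fin p → V),
        Function.Bijective v → StrictMono (fun i => f (v i)) →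
        ((p : ℤ) - 1) * ((G.diam : ℤ) + 1)
          - ∑ i : Fin (p - 1),
              (G.dist (v (Fin.castLE (Nat.sub_le p 1) i)) (v ⟨(i : ℕ) + 1, by omega⟩) : ℤ)
          ≤ (labelSpan f : ℤ)) ∧
    Fintype.card V - 1 ≤ radioNumber G := by
  constructor
  · intro f hf p hp v hv hmono
    exact aux_span_bound G hG f hf p hp v hv hmono
  · apply le_csInf
    · exact ⟨_, _, aux_exists_labeling G, rfl⟩
    · rintro s ⟨f, hf, rfl⟩
      exact aux_card_le_span G hG f hf
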